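/- arXiv:2305.12415 — 5 statements merged into one kernel-verified Lean document; each statement's English description precedes it below -/
import Mathlib

section
/- Let h be a (2-dimensional) Hadamard matrix of order v, i.e. a v×v matrix with entries in {-1,1} whose rows are pairwise orthogonal (equivalently h·hᵀ = v·I). For n ≥ 2 define the n-dimensional matrix H of order v by H(i₁,…,iₙ) = ∏_{1 ≤ j < k ≤ n} h(i_j, i_k). Then H is an n-dimensional Hadamard matrix: for every coordinate position j ∈ {1,…,n} and all indices a, b ∈ {1,…,v}, one has ∑ H(i₁,…,a,…,iₙ)·H(i₁,…,b,…,iₙ) = v^{n-1}·δ_{ab}, where the sum runs over all choices of the remaining n-1 indices i₁,…,î_j,…,iₙ ∈ {1,…,v} and a, b occupy position j. -/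
/-!
Write `i_a`, `i_b` for the points with `j`-th coordinate `a`, `b` and the remaining coordinates
`g`. In `H(i_a) H(i_b)` every factor `h(i_p, i_q)` with `p, q ≠ j` appears twice and squares
to `1`, so the product splits as `∏_{k ≠ j} T_k(g_k)`, where `T_k(x) = h(a,x) h(b,x)` for
`k > j` and `h(x,a) h(x,b)` for `k < j`. Summing over `g` turns this into `∏_{k ≠ j} ∑_x T_k(x)`,
and each factor is `v δ_{ab}` by orthogonality of the rows, resp. of the columns, of `h`
(`h hᵀ = v I` forces `hᵀ h = v I`).
-/

open Finset

namespace Matrix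

variable {m R : Type*} [Fintype m] [DecidableEq m] [CommRing R] [IsDomain R]

/-- Over a domain, `A * B = c • 1` with `c ≠ 0` forces `det A ≠ 0`, so `A` is left-cancellable
(multiply by its adjugate). -/
theorem mul_eq_smul_one_comm {A B : Matrix m m R} {c : R} (hc : c ≠ 0) (hAB : A * B = c • 1) :
    B * A = c • 1 := by
  have hdet : A.det ≠ 0 := by
    intro h0
    have := congrArg det hAB
    rw [det_mul, h0, zero_mul, det_smul, det_one, mul_one] at this
    exact pow_ne_zero _ hc this.symm
  have hker : A * (B * A - c • 1) = 0 := by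
    rw [Matrix.mul_sub, ← Matrix.mul_assoc, hAB, Matrix.smul_mul, Matrix.mul_smul, Matrix.one_mul,
      Matrix.mul_one, sub_self]
  have := congrArg (A.adjugate * ·) hker
  simp only [← Matrix.mul_assoc, adjugate_mul, Matrix.smul_mul, Matrix.one_mul,
    Matrix.mul_zero] at this
  exact sub_eq_zero.mp ((smul_eq_zero.mp this).resolve_left hdet)

theorem orthogonal_cols_of_orthogonal_rows {h : m → m → R} {c : R} (hc : c ≠ 0)
    (hrow : ∀ a b, ∑ y, h a y * h b y = if a = b then c else 0) (a b : m) :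
    ∑ x, h x a * h x b = if a = b then c else 0 := by
  have hA : of h * (of h)ᵀ = c • 1 := by
    ext a b
    simpa [mul_apply, one_apply] using hrow a b
  simpa [mul_apply, one_apply] using congrFun₂ (mul_eq_smul_one_comm hc hA) a b

end Matrix

section InsertAt

variable {ι α M : Type*} [Fintype ι] [LinearOrder ι] [CommMonoid M]

def insertAt (j : ι) (x : α) (g : {k // k ≠ j} → α) : ι → α :=
  fun k => if hk : k = j then x else g ⟨k, hk⟩

theorem prod_lt_pairs_eq_prod_ne (F : ι → ι → M) (j : ι)
    (hF : ∀ k l, k ≠ j → l ≠ j → F k l = 1) :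
    ∏ p ∈ univ.filter (fun p : ι × ι => p.1 < p.2), F p.1 p.2
      = ∏ k : {k // k ≠ j}, if j < k then F j k else F k j := by
  rw [← prod_filter_of_ne (p := fun p : ι × ι => p.1 = j ∨ p.2 = j) fun p _ hp => by
    by_contra! hne
    exact hp (hF _ _ hne.1 hne.2)]
  symm
  refine prod_bij (fun k _ => if j < k.1 then (j, k.1) else (k.1, j)) ?_ ?_ ?_ ?_
  · rintro ⟨k, hk⟩ -
    rcases hk.lt_or_gt with hlt | hgt
    · simp [hlt, not_lt.mpr hlt.le]
    · simp [hgt]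
  · rintro ⟨k, hk⟩ - ⟨l, hl⟩ - hkl
    rcases hk.lt_or_gt with hk | hk <;> rcases hl.lt_or_gt with hl | hl <;>
      simp_all [Prod.ext_iff, not_lt_of_gt]
  · intro p hp
    simp only [mem_filter, mem_univ, true_and] at hp
    obtain ⟨hlt, rfl | rfl⟩ := hp
    · exact ⟨⟨p.2, hlt.ne'⟩, mem_univ _, by simp [hlt]⟩
    · exact ⟨⟨p.1, hlt.ne⟩, mem_univ _, by simp [not_lt.mpr hlt.le]⟩
  · intro k _
    split_ifs <;> rfl

/-- Off coordinate `j` the two points agree, so those factors cancel as `f x y * f x y = 1`. -/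
theorem prod_lt_pairs_insertAt_mul (f : α → α → M) (hf : ∀ x y, f x y * f x y = 1) (j : ι)
    (a b : α) (g : {k // k ≠ j} → α) :
    (∏ p ∈ univ.filter (fun p : ι × ι => p.1 < p.2),
        f (insertAt j a g p.1) (insertAt j a g p.2)) *
      ∏ p ∈ univ.filter (fun p : ι × ι => p.1 < p.2),
        f (insertAt j b g p.1) (insertAt j b g p.2)
      = ∏ k : {k // k ≠ j},
          if j < k then f a (g k) * f b (g k) else f (g k) a * f (g k) b := by
  rw [← prod_mul_distrib]
  refine (prod_lt_pairs_eq_prod_ne (fun k l => f (insertAt j a g k) (insertAt j a g l) *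
    f (insertAt j b g k) (insertAt j b g l)) j fun k l hk hl => ?_).trans
    (prod_congr rfl fun k _ => ?_)
  · simpa [insertAt, hk, hl] using hf _ _
  · simp [insertAt, k.2]

end InsertAt

/-- Product construction: from a 2-dimensional Hadamard matrix `h` of order `v`
(a `v × v` matrix with entries in `{-1,1}` and pairwise orthogonal rows), the
`n`-dimensional matrix `H(i₁,…,iₙ) = ∏_{j<k} h(i_j, i_k)` is an `n`-dimensional
Hadamard matrix: for every coordinate position `j` and all `a b`, the sum over
the remaining `n-1` coordinates of `H(…,a,…)·H(…,b,…)` equals `v^(n-1)·δ_{ab}`. -/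
theorem product_construction_is_hadamard (v n : ℕ) (hn : 2 ≤ n)
    (h : Fin v → Fin v → ℤ)
    (hpm : ∀ i j, h i j = 1 ∨ h i j = -1)
    (hrow : ∀ a b : Fin v, ∑ y : Fin v, h a y * h b y = if a = b then (v : ℤ) else 0)
    (H : (Fin n → Fin v) → ℤ)
    (hH : ∀ i : Fin n → Fin v,
      H i = ∏ p ∈ Finset.univ.filter (fun p : Fin n × Fin n => p.1 < p.2),
        h (i p.1) (i p.2)) :
    ∀ j : Fin n, ∀ a b : Fin v,
      ∑ g : {k : Fin n // k ≠ j} → Fin v,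
        H (fun k => if hk : k = j then a else g ⟨k, hk⟩) *
        H (fun k => if hk : k = j then b else g ⟨k, hk⟩)
      = if a = b then (v : ℤ) ^ (n - 1) else 0 := by
  intro j a b
  have hsq : ∀ x y, h x y * h x y = 1 := fun x y => by rcases hpm x y with hxy | hxy <;> simp [hxy]
  have hcol := Matrix.orthogonal_cols_of_orthogonal_rows (Nat.cast_ne_zero.mpr a.pos.ne') hrow
  have hfactor : ∀ k : {k : Fin n // k ≠ j},
      ∑ x, (if j < k then h a x * h b x else h x a * h x b) = if a = b then (v : ℤ) else 0 := by
    intro k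
    by_cases hjk : j < k
    · simpa only [hjk, if_true] using hrow a b
    · simpa only [hjk, if_false] using hcol a b
  calc _ = ∑ g : {k : Fin n // k ≠ j} → Fin v, ∏ k : {k : Fin n // k ≠ j},
          if j < k then h a (g k) * h b (g k) else h (g k) a * h (g k) b :=
        sum_congr rfl fun g _ => by
          rw [hH, hH]
          exact prod_lt_pairs_insertAt_mul h hsq j a b g
    _ = ∏ k : {k : Fin n // k ≠ j}, ∑ x,
          if j < k then h a x * h b x else h x a * h x b := by
        rw [Fintype.prod_sum]
    _ = (if a = b then (v : ℤ) else 0) ^ (n - 1) := by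
        rw [prod_congr rfl fun k _ => hfactor k, prod_const, card_univ, Fintype.card_subtype_compl,
          Fintype.card_fin, Fintype.card_unique]
    _ = if a = b then (v : ℤ) ^ (n - 1) else 0 := by
        split_ifs
        · rfl
        · exact zero_pow (by omega)
end

section
/- Let h be a (2-dimensional) Hadamard matrix of order v and for n ≥ 2 define H(i₁,…,iₙ) = ∏_{1 ≤ j < k ≤ n} h(i_j, i_k). Then H is a proper n-dimensional Hadamard matrix: every 2-dimensional layer of H, obtained by fixing any n-2 of the coordinates and letting the remaining two coordinates vary, is a v×v Hadamard matrix (a {-1,1} matrix with pairwise orthogonal rows and pairwise orthogonal columns). -/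
open Finset

/-- Product construction, propriety: from a 2-dimensional Hadamard matrix `h` of
order `v` (a `v × v` matrix with entries in `{-1,1}`, pairwise orthogonal rows and
pairwise orthogonal columns), the `n`-dimensional matrix
`H(i₁,…,iₙ) = ∏_{j<k} h(i_j, i_k)` is a proper `n`-dimensional Hadamard matrix:
every 2-dimensional layer `L`, obtained by fixing all coordinates except two
(positions `j ≠ k`, the fixed values given by `g`), is a `v × v` Hadamard matrix. -/
theorem product_construction_is_proper (v n : ℕ) (hn : 2 ≤ n)
    (h : Fin v → Fin v → ℤ)
    (hpm : ∀ i j, h i j = 1 ∨ h i j = -1)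
    (hrow : ∀ a b : Fin v, ∑ y : Fin v, h a y * h b y = if a = b then (v : ℤ) else 0)
    (hcol : ∀ a b : Fin v, ∑ x : Fin v, h x a * h x b = if a = b then (v : ℤ) else 0)
    (H : (Fin n → Fin v) → ℤ)
    (hH : ∀ i : Fin n → Fin v,
      H i = ∏ p ∈ Finset.univ.filter (fun p : Fin n × Fin n => p.1 < p.2),
        h (i p.1) (i p.2)) :
    ∀ j k : Fin n, j ≠ k →
      ∀ g : {l : Fin n // l ≠ j ∧ l ≠ k} → Fin v,
      ∀ L : Fin v → Fin v → ℤ,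
      (∀ x y : Fin v, L x y =
        H (fun l => if h1 : l = j then x else if h2 : l = k then y else g ⟨l, ⟨h1, h2⟩⟩)) →
      ((∀ x y : Fin v, L x y = 1 ∨ L x y = -1) ∧
       (∀ a b : Fin v, ∑ y : Fin v, L a y * L b y = if a = b then (v : ℤ) else 0) ∧
       (∀ a b : Fin v, ∑ x : Fin v, L x a * L x b = if a = b then (v : ℤ) else 0)) := by
  intro j k hjk g L hL
  -- the index function of the layer
  set i : Fin v → Fin v → Fin n → Fin v :=
    fun x y l => if h1 : l = j then x else if h2 : l = k then y else g ⟨l, ⟨h1, h2⟩⟩ with hi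
  have hij : ∀ x y, i x y j = x := by intro x y; simp [hi]
  have hik : ∀ x y, i x y k = y := by
    intro x y; simp [hi, (Ne.symm hjk)]
  have hil : ∀ x y l (h1 : l ≠ j) (h2 : l ≠ k), i x y l = g ⟨l, ⟨h1, h2⟩⟩ := by
    intro x y l h1 h2; simp [hi, h1, h2]
  set f : Fin v → Fin v → Fin n × Fin n → ℤ :=
    fun x y p => h (i x y p.1) (i x y p.2) with hf
  set P : Finset (Fin n × Fin n) := univ.filter (fun p => p.1 < p.2) with hP
  set Sjk : Finset (Fin n × Fin n) :=
    P.filter (fun p => (p.1 = j ∨ p.2 = j) ∧ (p.1 = k ∨ p.2 = k)) with hSjk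
  set Sj : Finset (Fin n × Fin n) :=
    P.filter (fun p => (p.1 = j ∨ p.2 = j) ∧ ¬(p.1 = k ∨ p.2 = k)) with hSj
  set Sk : Finset (Fin n × Fin n) :=
    P.filter (fun p => ¬(p.1 = j ∨ p.2 = j) ∧ (p.1 = k ∨ p.2 = k)) with hSk
  set S0 : Finset (Fin n × Fin n) :=
    P.filter (fun p => ¬(p.1 = j ∨ p.2 = j) ∧ ¬(p.1 = k ∨ p.2 = k)) with hS0
  have hsplit : ∀ F : Fin n × Fin n → ℤ, ∏ p ∈ P, F p =
      ((∏ p ∈ Sjk, F p) * ∏ p ∈ Sj, F p) * ((∏ p ∈ Sk, F p) * ∏ p ∈ S0, F p) := by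
    intro F
    rw [← prod_filter_mul_prod_filter_not P (fun p => p.1 = j ∨ p.2 = j) F]
    congr 1
    · rw [← prod_filter_mul_prod_filter_not (P.filter (fun p => p.1 = j ∨ p.2 = j))
        (fun p => p.1 = k ∨ p.2 = k) F]
      congr 1 <;> refine prod_congr ?_ fun _ _ => rfl <;> ext p <;>
        simp only [hSjk, hSj, hP, mem_filter, mem_univ, true_and] <;> tauto
    · rw [← prod_filter_mul_prod_filter_not (P.filter (fun p => ¬(p.1 = j ∨ p.2 = j)))
        (fun p => p.1 = k ∨ p.2 = k) F]
      congr 1 <;> refine prod_congr ?_ fun _ _ => rfl <;> ext p <;>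
        simp only [hSk, hS0, hP, mem_filter, mem_univ, true_and] <;> tauto
  have hLf : ∀ x y, L x y = ∏ p ∈ P, f x y p := by
    intro x y; rw [hL, hH]
  -- agreement lemmas
  have hag1 : ∀ x y y' (l : Fin n), l ≠ k → i x y l = i x y' l := by
    intro x y y' l hlk
    by_cases hlj : l = j
    · rw [hlj, hij, hij]
    · rw [hil x y l hlj hlk, hil x y' l hlj hlk]
  have hag2 : ∀ x x' y (l : Fin n), l ≠ j → i x y l = i x' y l := by
    intro x x' y l hlj
    by_cases hlk : l = k
    · rw [hlk, hik, hik]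
    · rw [hil x y l hlj hlk, hil x' y l hlj hlk]
  set T : Fin v → Fin v → ℤ := fun x y => ∏ p ∈ Sjk, f x y p with hT
  set A : Fin v → ℤ := fun x => ∏ p ∈ Sj, f x x p with hA
  set B : Fin v → ℤ := fun y => ∏ p ∈ Sk, f y y p with hB
  set C : Fin v → ℤ := fun x => ∏ p ∈ S0, f x x p with hC
  -- factorization
  have hfac : ∀ x y, L x y = (T x y * A x) * (B y * C x) := by
    intro x y
    rw [hLf, hsplit (f x y)]
    congr 1
    · congr 1
      refine prod_congr rfl fun p hp => ?_
      rw [hSj, mem_filter] at hp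
      obtain ⟨-, -, hk'⟩ := hp
      push_neg at hk'
      simp only [hf]
      rw [hag1 x y x p.1 hk'.1, hag1 x y x p.2 hk'.2]
    · congr 1
      · refine prod_congr rfl fun p hp => ?_
        rw [hSk, mem_filter] at hp
        obtain ⟨-, hj', -⟩ := hp
        push_neg at hj'
        simp only [hf]
        rw [hag2 x y y p.1 hj'.1, hag2 x y y p.2 hj'.2]
      · refine prod_congr rfl fun p hp => ?_
        rw [hS0, mem_filter] at hp
        obtain ⟨-, -, hk'⟩ := hp
        push_neg at hk'
        simp only [hf]
        rw [hag1 x y x p.1 hk'.1, hag1 x y x p.2 hk'.2]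
  -- C is constant
  have hCc : ∀ x x', C x = C x' := by
    intro x x'
    refine prod_congr rfl fun p hp => ?_
    rw [hS0, mem_filter] at hp
    obtain ⟨-, hj', hk'⟩ := hp
    push_neg at hj'; push_neg at hk'
    simp only [hf]
    rw [hil x x p.1 hj'.1 hk'.1, hil x' x' p.1 hj'.1 hk'.1,
        hil x x p.2 hj'.2 hk'.2, hil x' x' p.2 hj'.2 hk'.2]
  -- squares are one
  have hfsq : ∀ x y p, f x y p * f x y p = 1 := by
    intro x y p
    rcases hpm (i x y p.1) (i x y p.2) with h' | h' <;> simp [hf, h']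
  have hprodsq : ∀ (s : Finset (Fin n × Fin n)) (x y : Fin v),
      (∏ p ∈ s, f x y p) * (∏ p ∈ s, f x y p) = 1 := by
    intro s x y
    rw [← prod_mul_distrib]
    exact prod_eq_one fun p _ => hfsq x y p
  have hAsq : ∀ x, A x * A x = 1 := fun x => hprodsq Sj x x
  have hBsq : ∀ y, B y * B y = 1 := fun y => hprodsq Sk y y
  have hCsq : ∀ x, C x * C x = 1 := fun x => hprodsq S0 x x
  -- compute T
  have hjkv : (j : ℕ) ≠ (k : ℕ) := fun hh => hjk (Fin.ext hh)
  have hTval : ∀ x y, T x y = if j < k then h x y else h y x := by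
    intro x y
    by_cases hlt : j < k
    · have hs : Sjk = {(j, k)} := by
        ext p
        simp only [hSjk, hP, mem_filter, mem_univ, true_and, mem_singleton, Prod.ext_iff]
        have hlt' : (j : ℕ) < (k : ℕ) := hlt
        simp only [Fin.lt_def, Fin.ext_iff]
        omega
      rw [hT]
      simp only [hs, prod_singleton, hf]
      rw [hij, hik, if_pos hlt]
    · have hlt2 : k < j := lt_of_le_of_ne (not_lt.mp hlt) (Ne.symm hjk)
      have hs : Sjk = {(k, j)} := by
        ext p
        simp only [hSjk, hP, mem_filter, mem_univ, true_and, mem_singleton, Prod.ext_iff]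
        have hlt' : (k : ℕ) < (j : ℕ) := hlt2
        simp only [Fin.lt_def, Fin.ext_iff]
        omega
      rw [hT]
      simp only [hs, prod_singleton, hf]
      rw [hij, hik, if_neg hlt]
  refine ⟨?_, ?_, ?_⟩
  · -- entries are ±1
    intro x y
    have hsq : L x y * L x y = 1 := by
      rw [hLf]; exact hprodsq P x y
    exact Int.isUnit_iff.mp (IsUnit.of_mul_eq_one _ hsq)
  · -- row orthogonality
    intro a b
    have key : ∀ y, L a y * L b y = (A a * A b) * (T a y * T b y) := by
      intro y
      rw [hfac a y, hfac b y]
      have e1 : (T a y * A a) * (B y * C a) * ((T b y * A b) * (B y * C b)) =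
          ((A a * A b) * (T a y * T b y)) * ((B y * B y) * (C a * C b)) := by ring
      rw [e1, hBsq, hCc a b, hCsq, one_mul, mul_one]
    calc ∑ y, L a y * L b y = ∑ y, (A a * A b) * (T a y * T b y) :=
          sum_congr rfl fun y _ => key y
      _ = (A a * A b) * ∑ y, T a y * T b y := by rw [mul_sum]
      _ = if a = b then (v : ℤ) else 0 := by
          by_cases hlt : j < k
          · have : ∑ y, T a y * T b y = if a = b then (v : ℤ) else 0 := by
              rw [← hrow a b]
              exact sum_congr rfl fun y _ => by rw [hTval, hTval, if_pos hlt, if_pos hlt]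
            rw [this]
            by_cases hab : a = b
            · subst hab; simp [hAsq]
            · simp [hab]
          · have : ∑ y, T a y * T b y = if a = b then (v : ℤ) else 0 := by
              rw [← hcol a b]
              exact sum_congr rfl fun y _ => by rw [hTval, hTval, if_neg hlt, if_neg hlt]
            rw [this]
            by_cases hab : a = b
            · subst hab; simp [hAsq]
            · simp [hab]
  · -- column orthogonality
    intro a b
    have key : ∀ x, L x a * L x b = (B a * B b) * (T x a * T x b) := by
      intro x
      rw [hfac x a, hfac x b]
      have e1 : (T x a * A x) * (B a * C x) * ((T x b * A x) * (B b * C x)) =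
          ((B a * B b) * (T x a * T x b)) * ((A x * A x) * (C x * C x)) := by ring
      rw [e1, hAsq, hCsq, one_mul, mul_one]
    calc ∑ x, L x a * L x b = ∑ x, (B a * B b) * (T x a * T x b) :=
          sum_congr rfl fun x _ => key x
      _ = (B a * B b) * ∑ x, T x a * T x b := by rw [mul_sum]
      _ = if a = b then (v : ℤ) else 0 := by
          by_cases hlt : j < k
          · have : ∑ x, T x a * T x b = if a = b then (v : ℤ) else 0 := by
              rw [← hcol a b]
              exact sum_congr rfl fun x _ => by rw [hTval, hTval, if_pos hlt, if_pos hlt]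
            rw [this]
            by_cases hab : a = b
            · subst hab; simp [hBsq]
            · simp [hab]
          · have : ∑ x, T x a * T x b = if a = b then (v : ℤ) else 0 := by
              rw [← hrow a b]
              exact sum_congr rfl fun x _ => by rw [hTval, hTval, if_neg hlt, if_neg hlt]
            rw [this]
            by_cases hab : a = b
            · subst hab; simp [hBsq]
            · simp [hab]
end

section
/- Let h : {1,…,v}ⁿ → {-1,1} be an n-dimensional Hadamard matrix of order v (indices taken in ℤ/vℤ). Define the (n+1)-dimensional matrix H of order v by H(i₁,…,iₙ,i_{n+1}) = h(i₁,…,i_{n-1}, i_n + i_{n+1}), where the sum i_n + i_{n+1} is taken modulo v. Then H is an (n+1)-dimensional Hadamard matrix of order v. -/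
/-!
It is convenient to use the full correlation sums `∑ i, F (update i j a) * F (update i j b)`,
which are `v` times those in `IsHadamardND`. Writing a point of the new cube as `Fin.snoc g x`,
we have `H (Fin.snoc g x) = h (g + x • e_p)` with `p` the last coordinate of `h`. Along a
coordinate `j ≠ p` of `g`, translating `g` by `x • e_p` removes `x`; along `p`, the value `x` is
added to both `a` and `b` and does not affect `δ_ab`; along the new coordinate, the sum becomes
the shifted correlation `∑ g, h (g + a • e_p) * h (g + b • e_p)`, which is `v ^ n δ_ab` by the
Hadamard property of `h` along `p`.
-/

open Finset

/-- An `n`-dimensional matrix of order `v` over `{-1,1}` (indices in `ℤ/vℤ`) is an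
`n`-dimensional Hadamard matrix if for every coordinate position `j` and all values
`a b`, the sum over the remaining `n-1` coordinates of `H(…,a,…)·H(…,b,…)` equals
`v^(n-1)·δ_{ab}`. -/
def IsHadamardND (v n : ℕ) [NeZero v] (H : (Fin n → ZMod v) → ℤ) : Prop :=
  (∀ i, H i = 1 ∨ H i = -1) ∧
  ∀ j : Fin n, ∀ a b : ZMod v,
    ∑ g : {k : Fin n // k ≠ j} → ZMod v,
      H (fun k => if hk : k = j then a else g ⟨k, hk⟩) *
      H (fun k => if hk : k = j then b else g ⟨k, hk⟩)
    = if a = b then (v : ℤ) ^ (n - 1) else 0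

open Function

lemma Fintype.sum_eq_sum_sum_dite {α β M : Type*} [Fintype α] [DecidableEq α] [Fintype β]
    [AddCommMonoid M] (j : α) (F : (α → β) → M) :
    ∑ f, F f = ∑ y, ∑ g : {k // k ≠ j} → β, F (fun k => if hk : k = j then y else g ⟨k, hk⟩) := by
  rw [← (Equiv.funSplitAt j β).symm.sum_comp, Fintype.sum_prod_type]
  refine Fintype.sum_congr _ _ fun y => Fintype.sum_congr _ _ fun g => congrArg F (funext fun k => ?_)
  by_cases hk : k = j
  · subst hk; simp
  · simp [hk]

lemma Fintype.sum_update_mul_update {α β R : Type*} [Fintype α] [DecidableEq α] [Fintype β]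
    [CommSemiring R] (j : α) (F : (α → β) → R) (a b : β) :
    ∑ i, F (update i j a) * F (update i j b) =
      Fintype.card β * ∑ g : {k // k ≠ j} → β,
        F (fun k => if hk : k = j then a else g ⟨k, hk⟩) *
        F (fun k => if hk : k = j then b else g ⟨k, hk⟩) := by
  have hupdate (y c : β) (g : {k // k ≠ j} → β) :
      update (fun k => if hk : k = j then y else g ⟨k, hk⟩) j c =
        fun k => if hk : k = j then c else g ⟨k, hk⟩ := by
    ext k
    by_cases hk : k = j
    · subst hk; simp
    · simp [hk]
  simp only [Fintype.sum_eq_sum_sum_dite j, hupdate, Finset.sum_const, Finset.card_univ,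
    nsmul_eq_mul]

lemma Pi.update_add_single_self {α β : Type*} [DecidableEq α] [AddZeroClass β]
    (g : α → β) (p : α) (a x : β) : update g p a + Pi.single p x = update g p (a + x) := by
  ext k
  by_cases hk : k = p
  · subst hk; simp
  · simp [hk]

lemma Pi.update_add_single_of_ne {α β : Type*} [DecidableEq α] [AddZeroClass β]
    {j p : α} (hjp : j ≠ p) (g : α → β) (a x : β) :
    update g j a + Pi.single p x = update (g + Pi.single p x) j a := by
  ext k
  by_cases hk : k = j
  · subst hk; simp [hjp]
  · simp [hk]

lemma Fintype.sum_eq_sum_sum_snoc {β M : Type*} [Fintype β] [AddCommMonoid M] {n : ℕ}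
    (F : (Fin (n + 1) → β) → M) : ∑ i, F i = ∑ g, ∑ x, F (Fin.snoc g x) := by
  rw [← (Fin.snocEquiv fun _ => β).sum_comp, Fintype.sum_prod_type_right]
  rfl

section

variable {v : ℕ} [NeZero v]

theorem isHadamardND_iff {n : ℕ} {H : (Fin n → ZMod v) → ℤ} :
    IsHadamardND v n H ↔ (∀ i, H i = 1 ∨ H i = -1) ∧
      ∀ j : Fin n, ∀ a b : ZMod v,
        ∑ i, H (update i j a) * H (update i j b) = if a = b then (v : ℤ) ^ n else 0 := by
  refine and_congr_right fun _ => forall_congr' fun j => forall₂_congr fun a b => ?_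
  have hv : (v : ℤ) ≠ 0 := Int.natCast_ne_zero.mpr (NeZero.ne v)
  have hn : (v : ℤ) ^ n = v * v ^ (n - 1) := by rw [← pow_succ', Nat.sub_add_cancel j.pos]
  rw [Fintype.sum_update_mul_update, ZMod.card, hn, ← mul_ite_zero, mul_right_inj' hv]

theorem IsHadamardND.sum_add_single_mul_add_single {n : ℕ} {h : (Fin n → ZMod v) → ℤ}
    (hh : IsHadamardND v n h) (p : Fin n) (a b : ZMod v) :
    ∑ g : Fin n → ZMod v, h (g + Pi.single p a) * h (g + Pi.single p b) =
      if a = b then (v : ℤ) ^ n else 0 := by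
  have hshift (y c : ZMod v) (g : {k // k ≠ p} → ZMod v) :
      (fun k => if hk : k = p then y else g ⟨k, hk⟩) + Pi.single p c =
        fun k => if hk : k = p then y + c else g ⟨k, hk⟩ := by
    ext k
    by_cases hk : k = p
    · subst hk; simp
    · simp [hk]
  simp only [Fintype.sum_eq_sum_sum_dite p, hshift]
  rw [Finset.sum_congr rfl fun y _ => hh.2 p (y + a) (y + b)]
  simp only [add_right_inj]
  rw [Finset.sum_const, Finset.card_univ, ZMod.card, nsmul_eq_mul, mul_ite_zero, ← pow_succ',
    Nat.sub_add_cancel p.pos]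

theorem IsHadamardND.snoc {n : ℕ} {h : (Fin n → ZMod v) → ℤ} (hh : IsHadamardND v n h)
    (p : Fin n) {H : (Fin (n + 1) → ZMod v) → ℤ}
    (hH : ∀ g x, H (Fin.snoc g x) = h (g + Pi.single p x)) : IsHadamardND v (n + 1) H := by
  have hconst (a b : ZMod v) : ∑ _x : ZMod v, (if a = b then (v : ℤ) ^ n else 0) =
      if a = b then (v : ℤ) ^ (n + 1) else 0 := by
    rw [Finset.sum_const, Finset.card_univ, ZMod.card, nsmul_eq_mul, mul_ite_zero, ← pow_succ']
  have hfull := isHadamardND_iff.1 hh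
  refine isHadamardND_iff.2 ⟨fun i => ?_, fun j a b => ?_⟩
  · rw [← Fin.snoc_init_self i, hH]
    exact hh.1 _
  rw [Fintype.sum_eq_sum_sum_snoc]
  cases j using Fin.lastCases with
  | last =>
    simp only [Fin.update_snoc_last, hH, Finset.sum_const, Finset.card_univ, ZMod.card,
      nsmul_eq_mul, ← Finset.mul_sum]
    rw [hh.sum_add_single_mul_add_single, mul_ite_zero, ← pow_succ']
  | cast j =>
    simp only [← Fin.snoc_update, hH]
    rw [Finset.sum_comm, ← hconst]
    refine Finset.sum_congr rfl fun x _ => ?_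
    by_cases hjp : j = p
    · subst hjp
      simp only [Pi.update_add_single_self]
      exact hfull.2 j (a + x) (b + x) |>.trans (by simp only [add_left_inj])
    · simp only [Pi.update_add_single_of_ne hjp]
      exact (Equiv.sum_comp (Equiv.addRight (Pi.single p x))
        fun g => h (update g j a) * h (update g j b)).trans (hfull.2 j a b)

end

/-- Dimension-raising construction: if `h` is an `n`-dimensional Hadamard matrix of
order `v`, then `H(i₁,…,iₙ,i_{n+1}) = h(i₁,…,i_{n-1}, i_n + i_{n+1})` (the sum in the
last coordinate taken modulo `v`) is an `(n+1)`-dimensional Hadamard matrix of order `v`. -/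
theorem dimension_raising (v n : ℕ) [NeZero v] (hn : 1 ≤ n)
    (h : (Fin n → ZMod v) → ℤ)
    (hh : IsHadamardND v n h)
    (H : (Fin (n + 1) → ZMod v) → ℤ)
    (hH : ∀ i : Fin (n + 1) → ZMod v,
      H i = h (fun k : Fin n =>
        if (k : ℕ) + 1 = n then i k.castSucc + i (Fin.last n) else i k.castSucc)) :
    IsHadamardND v (n + 1) H := by
  obtain ⟨m, rfl⟩ : ∃ m, n = m + 1 := ⟨n - 1, by omega⟩
  refine hh.snoc (Fin.last m) fun g x => (hH _).trans (congrArg h (funext fun k => ?_))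
  by_cases hk : k = Fin.last m
  · subst hk
    simp
  · have hk' : (k : ℕ) ≠ m := fun hc => hk (Fin.ext hc)
    simp [hk, hk']
end

section
/- Let q be an odd prime power and let a, b, c, d ∈ 𝔽_q satisfy ad - bc = 1. Let f : PG(1,q) → PG(1,q) be the linear fractional transformation f(x) = (ax+b)/(cx+d) (with the usual conventions: f(x) = ∞ when cx + d = 0, and f(∞) = a/c, where a/0 = ∞). Then the three-dimensional Paley matrix H satisfies H(f(x), f(y), f(z)) = H(x,y,z) for all x, y, z ∈ PG(1,q); that is, H is invariant under the action of PSL(2,q) on the projective line. -/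
open Finset

/-- The quadratic character on a field: `χ(a) = 1` if `a` is a (nonzero) square
and `χ(a) = -1` if `a` is a non-square. (Its value at `0` is irrelevant below:
it is only ever applied to nonzero field elements.) -/
noncomputable def chi {F : Type*} [Field F] (a : F) : ℤ := by
  classical exact if IsSquare a then 1 else -1

/-- The three-dimensional Paley matrix on the projective line
`PG(1,q) = {∞} ∪ 𝔽_q`, modelled as `Option F` with `none = ∞`:
`H(x,y,z) = -1` if `x = y = z`; `H(x,y,z) = 1` if exactly two of `x,y,z` are
equal; and for pairwise distinct coordinates `H(∞,y,z) = χ(z-y)`,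
`H(x,∞,z) = χ(x-z)`, `H(x,y,∞) = χ(y-x)`, and
`H(x,y,z) = χ((x-y)(y-z)(z-x))` when `x,y,z ∈ 𝔽_q`. -/
noncomputable def paleyH {F : Type*} [Field F] [DecidableEq F] :
    Option F → Option F → Option F → ℤ := fun x y z =>
  if x = y ∧ y = z then -1
  else if x = y ∨ y = z ∨ z = x then 1
  else match x, y, z with
    | none, some b, some c => chi (c - b)
    | some a, none, some c => chi (a - c)
    | some a, some b, none => chi (b - a)
    | some a, some b, some c => chi ((a - b) * (b - c) * (c - a))
    | _, _, _ => 1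

/-- The linear fractional transformation `f(x) = (ax+b)/(cx+d)` on the projective
line `PG(1,q) = {∞} ∪ 𝔽_q` (modelled as `Option F` with `none = ∞`), with the usual
conventions: `f(x) = ∞` when `cx + d = 0`, and `f(∞) = a/c` where `a/0 = ∞`. -/
def lft {F : Type*} [Field F] [DecidableEq F] (a b c d : F) :
    Option F → Option F
  | none => if c = 0 then none else some (a / c)
  | some x => if c * x + d = 0 then none else some ((a * x + b) / (c * x + d))

section Aux
variable {F : Type*} [Field F] [DecidableEq F]

/-- Auxiliary "signed difference" on the projective line. -/
def pg : Option F → Option F → F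
  | some u, some v => u - v
  | none, some _ => 1
  | some _, none => -1
  | none, none => 1

/-- Auxiliary weight function for the cocycle identity. -/
def pw (a b c d : F) : Option F → F
  | none => if c = 0 then d else c⁻¹
  | some x => if c * x + d = 0 then -c else (c * x + d)⁻¹

lemma chi_sq_mul (s v : F) (hs : s ≠ 0) : chi (s ^ 2 * v) = chi v := by
  have h : IsSquare (s ^ 2 * v) ↔ IsSquare v := by
    constructor
    · rintro ⟨t, ht⟩
      exact ⟨t / s, by field_simp; linear_combination ht⟩
    · rintro ⟨t, ht⟩
      exact ⟨s * t, by rw [ht]; ring⟩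
  unfold chi
  by_cases h2 : IsSquare v
  · rw [if_pos (h.mpr h2), if_pos h2]
  · rw [if_neg (fun hh => h2 (h.mp hh)), if_neg h2]

lemma pg_ne {x y : Option F} (h : x ≠ y) : pg x y ≠ 0 := by
  cases x <;> cases y <;> simp_all [pg, sub_ne_zero]

variable {a b c d : F} (hdet : a * d - b * c = 1)

include hdet

lemma pw_ne : ∀ t : Option F, pw a b c d t ≠ 0 := by
  intro t
  cases t with
  | none =>
    simp only [pw]
    split
    · rename_i hc; intro hd; rw [hc, hd] at hdet; simp at hdet
    · rename_i hc; exact inv_ne_zero hc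
  | some x =>
    simp only [pw]
    split
    · rename_i h
      intro hc0
      have hc : c = 0 := by simpa using hc0
      rw [hc] at h hdet; simp at h; rw [h] at hdet; simp at hdet
    · rename_i h; exact inv_ne_zero h

lemma pg_lft (x y : Option F) (hxy : x ≠ y) :
    pg (lft a b c d x) (lft a b c d y) = pw a b c d x * pw a b c d y * pg x y := by
  cases x with
  | none =>
    cases y with
    | none => exact absurd rfl hxy
    | some v =>
      by_cases hc : c = 0
      · have hd : d ≠ 0 := by intro hd; rw [hc, hd] at hdet; simp at hdet
        subst hc
        simp [lft, pw, pg, hd]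
      · by_cases hv : c * v + d = 0
        · simp [lft, pw, pg, hc, hv]
        · simp [lft, pw, pg, hc, hv]
          field_simp
          linear_combination hdet
  | some u =>
    cases y with
    | none =>
      by_cases hc : c = 0
      · have hd : d ≠ 0 := by intro hd; rw [hc, hd] at hdet; simp at hdet
        subst hc
        simp [lft, pw, pg, hd]
      · by_cases hu : c * u + d = 0
        · simp [lft, pw, pg, hc, hu]
        · simp [lft, pw, pg, hc, hu]
          have hu' : u * c + d ≠ 0 := by rwa [mul_comm] at hu
          field_simp
          linear_combination -hdet
    | some v =>
      have huv : u ≠ v := by intro h; exact hxy (by rw [h])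
      by_cases hu : c * u + d = 0
      · have hc : c ≠ 0 := by
          intro hc; rw [hc] at hu; simp at hu; rw [hc, hu] at hdet; simp at hdet
        have hv : c * v + d ≠ 0 := by
          intro hv
          apply huv
          have h0 : c * (u - v) = 0 := by linear_combination hu - hv
          rcases mul_eq_zero.mp h0 with h | h
          · exact absurd h hc
          · exact sub_eq_zero.mp h
        simp [lft, pw, pg, hu, hv]
        field_simp
        linear_combination hu
      · by_cases hv : c * v + d = 0
        · simp [lft, pw, pg, hu, hv]
          field_simp
          linear_combination hv
        · simp [lft, pw, pg, hu, hv]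
          have hu' : u * c + d ≠ 0 := by rwa [mul_comm] at hu
          have hv' : v * c + d ≠ 0 := by rwa [mul_comm] at hv
          field_simp
          linear_combination (u - v) * hdet

lemma lft_ne {x y : Option F} (hxy : x ≠ y) :
    lft a b c d x ≠ lft a b c d y := by
  intro heq
  have h0 : pg (lft a b c d x) (lft a b c d y) ≠ 0 := by
    rw [pg_lft hdet x y hxy]
    exact mul_ne_zero (mul_ne_zero (pw_ne hdet x) (pw_ne hdet y)) (pg_ne hxy)
  cases hfx : lft a b c d x with
  | some u => rw [hfx, heq.symm.trans hfx] at h0; simp [pg] at h0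
  | none =>
    have hfy : lft a b c d y = none := heq ▸ hfx
    cases x with
    | none =>
      have hc : c = 0 := by
        by_contra hc; simp [lft, hc] at hfx
      cases y with
      | none => exact hxy rfl
      | some v =>
        have : c * v + d = 0 := by
          by_contra hv; simp [lft, hv] at hfy
        rw [hc] at this; simp at this
        rw [hc, this] at hdet; simp at hdet
    | some u =>
      have hu : c * u + d = 0 := by
        by_contra hu; simp [lft, hu] at hfx
      cases y with
      | none =>
        have hc : c = 0 := by
          by_contra hc; simp [lft, hc] at hfy
        rw [hc] at hu; simp at hu
        rw [hc, hu] at hdet; simp at hdet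
      | some v =>
        have hv : c * v + d = 0 := by
          by_contra hv; simp [lft, hv] at hfy
        have hc : c ≠ 0 := by
          intro hc; rw [hc] at hu; simp at hu; rw [hc, hu] at hdet; simp at hdet
        have h0' : c * (u - v) = 0 := by linear_combination hu - hv
        rcases mul_eq_zero.mp h0' with h | h
        · exact hc h
        · exact hxy (by rw [sub_eq_zero.mp h])

omit hdet in
lemma paleyH_eq_chi (x y z : Option F) (hxy : x ≠ y) (hyz : y ≠ z) (hzx : z ≠ x) :
    paleyH x y z = chi (pg x y * pg y z * pg z x) := by
  have h1 : ¬ (x = y ∧ y = z) := fun h => hxy h.1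
  have h2 : ¬ (x = y ∨ y = z ∨ z = x) := by
    rintro (h | h | h)
    exacts [hxy h, hyz h, hzx h]
  cases x <;> cases y <;> cases z <;>
    first
    | exact absurd rfl hxy
    | exact absurd rfl hyz
    | exact absurd rfl hzx
    | (rw [paleyH, if_neg h1, if_neg h2]; simp only [pg]; try congr 1; try ring)

end Aux

/-- The three-dimensional Paley matrix is invariant under linear fractional
transformations with determinant `1`, i.e. under the action of `PSL(2,q)` on the
projective line: `H(f(x), f(y), f(z)) = H(x,y,z)`. -/
theorem paleyH_psl_invariant {F : Type*} [Field F] [Fintype F] [DecidableEq F]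
    (hq : Odd (Fintype.card F)) (a b c d : F) (hdet : a * d - b * c = 1) :
    ∀ x y z : Option F,
      paleyH (lft a b c d x) (lft a b c d y) (lft a b c d z) = paleyH x y z := by
  intro x y z
  by_cases hxy : x = y
  · subst hxy
    by_cases hyz : x = z
    · subst hyz
      simp [paleyH]
    · have h2 : lft a b c d x ≠ lft a b c d z := lft_ne hdet hyz
      simp [paleyH, hyz, h2]
  · have hfxy : lft a b c d x ≠ lft a b c d y := lft_ne hdet hxy
    by_cases hyz : y = z
    · subst hyz
      simp [paleyH, hxy, hfxy, Ne.symm hxy, Ne.symm hfxy]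
    · have hfyz : lft a b c d y ≠ lft a b c d z := lft_ne hdet hyz
      by_cases hzx : z = x
      · subst hzx
        simp [paleyH, hxy, hyz, hfxy, hfyz, Ne.symm hxy, Ne.symm hfxy]
      · have hfzx : lft a b c d z ≠ lft a b c d x := lft_ne hdet hzx
        rw [paleyH_eq_chi _ _ _ hfxy hfyz hfzx, paleyH_eq_chi _ _ _ hxy hyz hzx]
        rw [pg_lft hdet x y hxy, pg_lft hdet y z hyz, pg_lft hdet z x hzx]
        have key : pw a b c d x * pw a b c d y * pg x y *
            (pw a b c d y * pw a b c d z * pg y z) *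
            (pw a b c d z * pw a b c d x * pg z x) =
            (pw a b c d x * pw a b c d y * pw a b c d z) ^ 2 *
            (pg x y * pg y z * pg z x) := by ring
        rw [key, chi_sq_mul _ _ (mul_ne_zero (mul_ne_zero (pw_ne hdet x) (pw_ne hdet y)) (pw_ne hdet z))]
end

section
/- Let q be an odd prime power and H the three-dimensional Paley matrix on PG(1,q). Then the two 2-dimensional layers of H obtained by fixing the third coordinate to 0 and to ∞ are orthogonal: ∑_{x,y ∈ PG(1,q)} H(x,y,0)·H(x,y,∞) = 0. -/
open Finset

/-!
Write `ψ` for the quadratic character of `F` (so `ψ 0 = 0`). Off a few degenerate positions the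
product `H(x,y,0) H(x,y,∞)` is `ψ(xy)`, `ψ(-y)` or `ψ(x)` (according as `x, y ∈ F`, `x = ∞` or
`y = ∞`); tracking the corrections, the row `x = ∞` sums to `0` and the row `x = a ∈ F`
to `ψ(a) + ψ(-a)`. Since `q` is odd, `ψ` is nontrivial and `∑ ψ = 0`, so the total vanishes.
-/

section

variable {F : Type*} [Field F]

lemma ringChar_ne_two_of_odd_card [Fintype F] (hq : Odd (Fintype.card F)) : ringChar F ≠ 2 := by
  rw [Ne, FiniteField.even_card_iff_char_two, ← Nat.even_iff, Nat.not_even_iff_odd]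
  exact hq

variable [DecidableEq F]

lemma paleyH_none_none_mul :
    paleyH (none : Option F) none (some 0) * paleyH (none : Option F) none none = -1 := by
  simp [paleyH]

variable [Fintype F]

lemma sum_quadraticChar_mul_left (hF : ringChar F ≠ 2) (c : F) :
    ∑ b : F, quadraticChar F (c * b) = 0 := by
  simp only [map_mul, ← Finset.mul_sum, quadraticChar_sum_zero hF, mul_zero]

lemma sum_quadraticChar_neg (hF : ringChar F ≠ 2) :
    ∑ b : F, quadraticChar F (-b) = 0 := by
  simpa using sum_quadraticChar_mul_left hF (-1)

lemma chi_eq_quadraticChar {a : F} (ha : a ≠ 0) :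
    chi a = quadraticChar F a := by
  simp [chi, quadraticChar_apply, quadraticCharFun, ha]

lemma chi_mul_chi {a b : F} (ha : a ≠ 0) (hb : b ≠ 0) :
    chi a * chi b = quadraticChar F (a * b) := by
  rw [chi_eq_quadraticChar ha, chi_eq_quadraticChar hb, map_mul]

lemma paleyH_none_some_mul (b : F) :
    paleyH none (some b) (some 0) * paleyH none (some b) none =
      quadraticChar F (-b) + if b = 0 then 1 else 0 := by
  by_cases hb : b = 0
  · simp [paleyH, hb]
  · simp [paleyH, hb, chi_eq_quadraticChar]

lemma paleyH_some_none_mul (a : F) :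
    paleyH (some a) none (some 0) * paleyH (some a) none none =
      quadraticChar F a + if a = 0 then 1 else 0 := by
  by_cases ha : a = 0
  · simp [paleyH, ha]
  · simp [paleyH, ha, Ne.symm ha, chi_eq_quadraticChar]

lemma paleyH_some_some_mul (a b : F) :
    paleyH (some a) (some b) (some 0) * paleyH (some a) (some b) none =
      quadraticChar F (a * b) + (if a = 0 then quadraticChar F b else 0) +
        (if b = 0 then quadraticChar F (-a) else 0) - (if a = 0 ∧ b = 0 then 1 else 0) := by
  by_cases hab : a = b
  · subst hab
    by_cases ha : a = 0
    · simp [paleyH, ha]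
    · simp [paleyH, ha, ← sq, quadraticChar_sq_one' ha]
  by_cases hb : b = 0
  · subst hb
    simp [paleyH, hab, chi_eq_quadraticChar]
  by_cases ha : a = 0
  · subst ha
    simp [paleyH, hb, Ne.symm hb, chi_eq_quadraticChar]
  have hba : b - a ≠ 0 := sub_ne_zero.mpr (Ne.symm hab)
  have hprod : (a - b) * b * (0 - a) ≠ 0 := by
    simp [sub_eq_zero, hab, ha, hb]
  have hsq : (a - b) * b * (0 - a) * (b - a) = a * b * (b - a) ^ 2 := by ring
  simp only [paleyH, Option.some.injEq, reduceCtorEq, hab, hb, Ne.symm ha, and_false,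
    or_self, if_false, ha, sub_zero, add_zero]
  rw [chi_mul_chi hprod hba, hsq, map_mul, quadraticChar_sq_one' hba, mul_one]

lemma sum_paleyH_none_mul (hF : ringChar F ≠ 2) :
    ∑ y : Option F, paleyH none y (some 0) * paleyH none y none = 0 := by
  simp only [Fintype.sum_option, paleyH_none_none_mul, paleyH_none_some_mul,
    Finset.sum_add_distrib, sum_quadraticChar_neg hF, Finset.sum_ite_eq', Finset.mem_univ, if_true]
  norm_num

lemma sum_paleyH_some_mul (hF : ringChar F ≠ 2) (a : F) :
    ∑ y : Option F, paleyH (some a) y (some 0) * paleyH (some a) y none =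
      quadraticChar F a + quadraticChar F (-a) := by
  simp only [Fintype.sum_option, paleyH_some_none_mul, paleyH_some_some_mul,
    Finset.sum_add_distrib, Finset.sum_sub_distrib, sum_quadraticChar_mul_left hF,
    quadraticChar_sum_zero hF, Finset.sum_ite_irrel, Finset.sum_const_zero, ite_and,
    Finset.sum_ite_eq', Finset.mem_univ, if_true]
  split_ifs <;> ring

end

/-- The two 2-dimensional layers of the three-dimensional Paley matrix obtained by
fixing the third coordinate to `0` and to `∞` are orthogonal:
`∑_{x,y ∈ PG(1,q)} H(x,y,0)·H(x,y,∞) = 0`. -/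
theorem paleyH_layers_zero_infty_orthogonal {F : Type*} [Field F] [Fintype F]
    [DecidableEq F] (hq : Odd (Fintype.card F)) :
    ∑ x : Option F, ∑ y : Option F,
      paleyH x y (some (0 : F)) * paleyH x y none = 0 := by
  have hF := ringChar_ne_two_of_odd_card hq
  rw [Fintype.sum_option, sum_paleyH_none_mul hF]
  simp only [sum_paleyH_some_mul hF, Finset.sum_add_distrib, quadraticChar_sum_zero hF,
    sum_quadraticChar_neg hF, add_zero]
end
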